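/- arXiv:1309.6797 — 4 statements merged into one kernel-verified Lean document; each statement's English description precedes it below -/
import Mathlib

section
/- Let k ≥ 2, N ≥ 1, and 0 ≤ ℓ ≤ (k-1)·N be integers. Let a : Fin N → ℕ satisfy aᵤ ≤ k-1 for all u and ∑ᵤ aᵤ = (k-1)·N - ℓ. Then ∑ᵤ H(aᵤ) ≥ (N - ℓ/(k-1))·H(k-1), where the right-hand side is a real number. -/
open Finset

/-- The `n`-th harmonic number `H(n) = ∑_{i=1}^n 1/i`, with `H(0) = 0`. -/
noncomputable def H (n : ℕ) : ℝ := ∑ i ∈ Finset.range n, (1 : ℝ) / (i + 1)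

lemma H_nonneg (n : ℕ) : 0 ≤ H n := by
  unfold H
  apply Finset.sum_nonneg
  intro i _
  positivity

lemma H_ge (n : ℕ) : H n ≥ (n : ℝ) / (n + 1) := by
  unfold H
  calc ∑ i ∈ Finset.range n, (1 : ℝ) / (i + 1)
      ≥ ∑ i ∈ Finset.range n, (1 : ℝ) / (n + 1) := by
        apply Finset.sum_le_sum
        intro i hi
        have hi' : (i : ℝ) + 1 ≤ (n : ℝ) + 1 := by
          have h := Finset.mem_range.mp hi
          have : (i : ℝ) ≤ n := by exact_mod_cast h.le
          linarith
        exact div_le_div_of_nonneg_left (by norm_num) (by positivity) hi'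
    _ = (n : ℝ) / (n + 1) := by
        rw [Finset.sum_const, Finset.card_range]
        ring

lemma H_succ (n : ℕ) : H (n + 1) = H n + 1 / ((n : ℝ) + 1) := by
  unfold H
  rw [Finset.sum_range_succ]

lemma H_key (a m : ℕ) (h : a ≤ m) : (m : ℝ) * H a ≥ (a : ℝ) * H m := by
  induction m, h using Nat.le_induction with
  | base => exact le_refl _
  | succ m hm ih =>
    rw [H_succ]
    push_cast
    have hm' : (a : ℝ) ≤ m := by exact_mod_cast hm
    have hHa : H a ≥ (a : ℝ) / (m + 1) := by
      have h2 : (a : ℝ) / (m + 1) ≤ (a : ℝ) / (a + 1) := by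
        apply div_le_div_of_nonneg_left (Nat.cast_nonneg a) (by positivity) (by linarith)
      linarith [H_ge a]
    have hmm : (0:ℝ) < (m:ℝ) + 1 := by positivity
    have e : (a:ℝ) * (1 / ((m:ℝ) + 1)) = (a:ℝ) / ((m:ℝ) + 1) := by ring
    nlinarith [H_nonneg a, H_nonneg m]

theorem sum_harmonic_lower_bound_real (k N ℓ : ℕ) (hk : 2 ≤ k) (hN : 1 ≤ N)
    (hℓ : ℓ ≤ (k - 1) * N)
    (a : Fin N → ℕ) (ha : ∀ u, a u ≤ k - 1)
    (hsum : ∑ u, a u = (k - 1) * N - ℓ) :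
    ∑ u, H (a u) ≥ ((N : ℝ) - (ℓ : ℝ) / ((k : ℝ) - 1)) * H (k - 1) := by
  have hk1 : 1 ≤ k - 1 := by omega
  have hkr : ((k - 1 : ℕ) : ℝ) = (k : ℝ) - 1 := by
    have h1 : (1:ℕ) ≤ k := by omega
    push_cast [Nat.cast_sub h1]
    ring
  have hkpos : (0:ℝ) < (k : ℝ) - 1 := by
    have h2 : (1:ℝ) ≤ ((k-1:ℕ):ℝ) := by exact_mod_cast hk1
    rw [hkr] at h2
    linarith
  have step : ∀ u : Fin N, H (a u) ≥ ((a u : ℝ) / ((k:ℝ) - 1)) * H (k - 1) := by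
    intro u
    have hK := H_key (a u) (k - 1) (ha u)
    rw [hkr] at hK
    rw [ge_iff_le, div_mul_eq_mul_div, div_le_iff₀ hkpos]
    linarith
  calc ∑ u, H (a u) ≥ ∑ u, ((a u : ℝ) / ((k:ℝ) - 1)) * H (k - 1) :=
        Finset.sum_le_sum (fun u _ => step u)
    _ = ((∑ u, (a u : ℝ)) / ((k:ℝ) - 1)) * H (k - 1) := by
        rw [← Finset.sum_mul, Finset.sum_div]
    _ = ((N : ℝ) - (ℓ : ℝ) / ((k : ℝ) - 1)) * H (k - 1) := by
        have hs : (∑ u, (a u : ℝ)) = ((k:ℝ) - 1) * N - ℓ := by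
          rw [← Nat.cast_sum, hsum, Nat.cast_sub hℓ]
          push_cast [Nat.cast_sub (by omega : 1 ≤ k)]
          ring
        rw [hs, sub_div, mul_div_cancel_left₀ _ (ne_of_gt hkpos)]
end

section
/- If ℓ and m are positive integers with ℓ < m, then H(ℓ)/ℓ ≥ H(m)/m + (m - ℓ)/m³, where H denotes the harmonic number. In particular, for ℓ < k(k-1) one has H(ℓ)/ℓ ≥ H(k(k-1))/(k(k-1)) + 1/(k(k-1))³ ≥ H(k(k-1))/(k(k-1)) + 1/k⁶ for k ≥ 2. -/
open Finset

lemma H_ge_one {n : ℕ} (hn : 1 ≤ n) : 1 ≤ H n := by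
  have := Finset.single_le_sum (f := fun i : ℕ => (1 : ℝ) / ((i : ℝ) + 1))
    (fun i _ => by positivity) (Finset.mem_range.mpr hn)
  simpa [H] using this

lemma H_step (t : ℕ) (ht : 1 ≤ t) :
    H t / (t : ℝ) - H (t + 1) / ((t : ℝ) + 1) ≥ 1 / ((t : ℝ) + 1) ^ 3 := by
  have hx : (1 : ℝ) ≤ t := by exact_mod_cast ht
  have hH := H_ge_one ht
  have hx0 : (0 : ℝ) < t := by linarith
  have hx1 : (0 : ℝ) < (t : ℝ) + 1 := by linarith
  rw [ge_iff_le, ← sub_nonneg, H_succ]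
  have expand : H t / (t : ℝ) - (H t + 1 / ((t : ℝ) + 1)) / ((t : ℝ) + 1)
      - 1 / ((t : ℝ) + 1) ^ 3
      = ((H t - 1) * ((t : ℝ) + 1) ^ 2 + 1) / ((t : ℝ) * ((t : ℝ) + 1) ^ 3) := by
    field_simp
    ring
  rw [expand]
  have hnum : 0 ≤ (H t - 1) * ((t : ℝ) + 1) ^ 2 + 1 := by nlinarith
  positivity

lemma H_gap (ℓ : ℕ) (hℓ : 0 < ℓ) : ∀ d : ℕ, 0 < d →
    H ℓ / (ℓ : ℝ) ≥ H (ℓ + d) / ((ℓ : ℝ) + d) + (d : ℝ) / ((ℓ : ℝ) + d) ^ 3 := by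
  intro d
  induction d with
  | zero => intro h; exact absurd h (lt_irrefl 0)
  | succ d ih =>
    intro _
    rcases Nat.eq_zero_or_pos d with hd | hd
    · subst hd
      have := H_step ℓ hℓ
      push_cast
      push_cast at this
      linarith
    · have h1 := ih hd
      have h2 := H_step (ℓ + d) (by omega)
      have hcast : ((ℓ + d : ℕ) : ℝ) = (ℓ : ℝ) + d := by push_cast; ring
      rw [hcast] at h2
      have hpos : (0 : ℝ) < (ℓ : ℝ) + d := by positivity
      have h3 : (d : ℝ) / ((ℓ : ℝ) + d + 1) ^ 3 ≤ (d : ℝ) / ((ℓ : ℝ) + d) ^ 3 :=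
        div_le_div_of_nonneg_left (Nat.cast_nonneg d) (by positivity)
          (by nlinarith [Nat.cast_nonneg (α := ℝ) ℓ, Nat.cast_nonneg (α := ℝ) d])
      have hre : ((ℓ : ℕ) + (d + 1) : ℕ) = (ℓ + d) + 1 := by omega
      rw [hre]
      push_cast
      have e : (ℓ : ℝ) + ((d : ℝ) + 1) = (ℓ : ℝ) + (d : ℝ) + 1 := by ring
      rw [e]
      have hsplit : ((d : ℝ) + 1) / ((ℓ : ℝ) + (d : ℝ) + 1) ^ 3
          = (d : ℝ) / ((ℓ : ℝ) + (d : ℝ) + 1) ^ 3 + 1 / ((ℓ : ℝ) + (d : ℝ) + 1) ^ 3 := by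
        ring
      linarith

theorem harmonic_ratio_gap :
    (∀ ℓ m : ℕ, 0 < ℓ → ℓ < m →
      H ℓ / (ℓ : ℝ) ≥ H m / (m : ℝ) + ((m : ℝ) - (ℓ : ℝ)) / (m : ℝ) ^ 3) ∧
    (∀ k ℓ : ℕ, 2 ≤ k → 0 < ℓ → ℓ < k * (k - 1) →
      H ℓ / (ℓ : ℝ) ≥ H (k * (k - 1)) / ((k : ℝ) * ((k : ℝ) - 1)) + 1 / (k : ℝ) ^ 6) := by
  have main : ∀ ℓ m : ℕ, 0 < ℓ → ℓ < m →
      H ℓ / (ℓ : ℝ) ≥ H m / (m : ℝ) + ((m : ℝ) - (ℓ : ℝ)) / (m : ℝ) ^ 3 := by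
    intro ℓ m hℓ hlt
    have hd : 0 < m - ℓ := by omega
    have := H_gap ℓ hℓ (m - ℓ) hd
    have h1 : ℓ + (m - ℓ) = m := by omega
    rw [h1] at this
    have h2 : ((m - ℓ : ℕ) : ℝ) = (m : ℝ) - (ℓ : ℝ) := by
      have : ℓ ≤ m := le_of_lt hlt
      push_cast [this]; ring
    have h3 : (ℓ : ℝ) + ((m - ℓ : ℕ) : ℝ) = (m : ℝ) := by rw [h2]; ring
    rw [h3, h2] at this
    exact this
  refine ⟨main, ?_⟩
  intro k ℓ hk hℓ hlt
  have hm : 2 ≤ k * (k - 1) := by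
    have : 1 ≤ k - 1 := by omega
    calc 2 = 2 * 1 := by ring
    _ ≤ k * (k - 1) := Nat.mul_le_mul hk this
  have h := main ℓ (k * (k - 1)) hℓ hlt
  have hcast : ((k * (k - 1) : ℕ) : ℝ) = (k : ℝ) * ((k : ℝ) - 1) := by
    have h1 : 1 ≤ k := by omega
    push_cast [h1]; ring
  rw [hcast] at h
  have hk2 : (2 : ℝ) ≤ (k : ℝ) := by exact_mod_cast hk
  have hm2 : (2 : ℝ) ≤ (k : ℝ) * ((k : ℝ) - 1) := by
    rw [← hcast]; exact_mod_cast hm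
  have hℓ1 : (1 : ℝ) ≤ (k : ℝ) * ((k : ℝ) - 1) - (ℓ : ℝ) := by
    have : (ℓ : ℝ) + 1 ≤ ((k * (k - 1) : ℕ) : ℝ) := by exact_mod_cast hlt
    rw [hcast] at this; linarith
  have hmpos : (0 : ℝ) < (k : ℝ) * ((k : ℝ) - 1) := by linarith
  have hle : ((k : ℝ) * ((k : ℝ) - 1)) ^ 3 ≤ (k : ℝ) ^ 6 := by
    have h0 : (k : ℝ) * ((k : ℝ) - 1) ≤ (k : ℝ) * (k : ℝ) := by nlinarith
    have h1 := pow_le_pow_left₀ (le_of_lt hmpos) h0 3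
    calc ((k : ℝ) * ((k : ℝ) - 1)) ^ 3 ≤ ((k : ℝ) * (k : ℝ)) ^ 3 := h1
      _ = (k : ℝ) ^ 6 := by ring
  have hfinal : 1 / (k : ℝ) ^ 6 ≤
      ((k : ℝ) * ((k : ℝ) - 1) - (ℓ : ℝ)) / ((k : ℝ) * ((k : ℝ) - 1)) ^ 3 := by
    calc 1 / (k : ℝ) ^ 6 ≤ 1 / ((k : ℝ) * ((k : ℝ) - 1)) ^ 3 :=
          one_div_le_one_div_of_le (by positivity) hle
        _ ≤ ((k : ℝ) * ((k : ℝ) - 1) - (ℓ : ℝ)) / ((k : ℝ) * ((k : ℝ) - 1)) ^ 3 := by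
          gcongr
  linarith
end

section
/- Let k ≥ 3, R = k², ε = (k-1)/k⁵, and W = (1/H(k(k-1)))·(k·R·H(k-1) - (3/2)·C(k,2) - ε). Then 3/4 + 1/(2k(k-1)) + W·H(k(k-1))/(k(k-1)) ≥ R·H(k-1)/(k-1). (If some cheap edge is used by exactly one rerouted player, the potential cannot decrease.) -/
open Finset

lemma H_pos {n : ℕ} (hn : 0 < n) : 0 < H n := by
  unfold H
  apply Finset.sum_pos
  · intro i _; positivity
  · exact Finset.nonempty_range_iff.mpr (by omega)

theorem lonely_player_no_decrease (k : ℕ) (hk : 3 ≤ k)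
    (R ε W : ℝ) (hR : R = (k : ℝ) ^ 2) (hε : ε = ((k : ℝ) - 1) / (k : ℝ) ^ 5)
    (hW : W = (1 / H (k * (k - 1))) *
      ((k : ℝ) * R * H (k - 1) - (3 / 2) * ((k : ℝ) * ((k : ℝ) - 1) / 2) - ε)) :
    3 / 4 + 1 / (2 * (k : ℝ) * ((k : ℝ) - 1))
        + W * H (k * (k - 1)) / ((k : ℝ) * ((k : ℝ) - 1))
      ≥ R * H (k - 1) / ((k : ℝ) - 1) := by
  have hk3 : (3 : ℝ) ≤ (k : ℝ) := by exact_mod_cast hk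
  have hkpos : (0 : ℝ) < k := by linarith
  have hk1 : (0 : ℝ) < (k : ℝ) - 1 := by linarith
  have hnpos : 0 < k * (k - 1) := by
    have : 2 ≤ k - 1 := by omega
    positivity
  have hHpos : 0 < H (k * (k - 1)) := H_pos hnpos
  have hWH : W * H (k * (k - 1))
      = (k : ℝ) * R * H (k - 1) - (3 / 2) * ((k : ℝ) * ((k : ℝ) - 1) / 2) - ε := by
    rw [hW]; field_simp
  have hW' : W * H (k * (k - 1)) / ((k : ℝ) * ((k : ℝ) - 1))
      = (k : ℝ) ^ 2 * H (k - 1) / ((k : ℝ) - 1) - 3 / 4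
        - ((k : ℝ) - 1) / ((k : ℝ) ^ 5 * ((k : ℝ) * ((k : ℝ) - 1))) := by
    rw [hWH, hR, hε]; field_simp; ring
  rw [hW', hR]
  have h2 : ((k : ℝ) - 1) / ((k : ℝ) ^ 5 * ((k : ℝ) * ((k : ℝ) - 1)))
      ≤ 1 / (2 * (k : ℝ) * ((k : ℝ) - 1)) := by
    rw [div_le_div_iff₀ (by positivity) (by positivity)]
    have hpow : (k : ℝ) ^ 2 ≤ (k : ℝ) ^ 5 :=
      pow_le_pow_right₀ (by linarith) (by norm_num)
    nlinarith [mul_pos hkpos hk1, sq_nonneg ((k : ℝ) - 1)]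
  linarith
end

section
/- Let G be a finite set of edges, c : G → ℝ≥0 edge costs, and for strategy profiles s (assignments of each of n players to a set of edges) define Rosenthal's potential Φ(s) = ∑_{e used in s} c(e)·H(n_e(s)), where n_e(s) is the number of players using e. If a single player changes strategy from s to s' = (s^{-i}, P'), then Φ(s') - Φ(s) = c^i(s') - c^i(s), where c^i(s) = ∑_{e ∈ P_i} c(e)/n_e(s) is player i's cost. (Rosenthal's potential is an exact potential function.) -/
open Finset

/-- Number of players using edge `e` under profile `s`. -/
def numUsers {E : Type*} {n : ℕ} (s : Fin n → Finset E) (e : E) [DecidableEq E] : ℕ :=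
  (Finset.univ.filter (fun j => e ∈ s j)).card

/-- Rosenthal's potential `Φ(s) = ∑_e c(e) · H(n_e(s))`. -/
noncomputable def potential {E : Type*} [Fintype E] [DecidableEq E] {n : ℕ}
    (c : E → ℝ) (s : Fin n → Finset E) : ℝ :=
  ∑ e, c e * H (numUsers s e)

/-- Player `i`'s cost `c^i(s) = ∑_{e ∈ P_i} c(e)/n_e(s)`. -/
noncomputable def playerCost {E : Type*} [DecidableEq E] {n : ℕ}
    (c : E → ℝ) (s : Fin n → Finset E) (i : Fin n) : ℝ :=
  ∑ e ∈ s i, c e / (numUsers s e : ℝ)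

/-- Rosenthal's potential is an exact potential function. -/
theorem rosenthal_exact_potential {E : Type*} [Fintype E] [DecidableEq E]
    (c : E → ℝ) (hc : ∀ e, 0 ≤ c e) (n : ℕ)
    (s : Fin n → Finset E) (i : Fin n) (P' : Finset E) :
    potential c (Function.update s i P') - potential c s
      = playerCost c (Function.update s i P') i - playerCost c s i := by
  classical
  set s' := Function.update s i P' with hs'
  have hnum : ∀ (t : Fin n → Finset E) (e : E), numUsers t e
      = (∑ j ∈ Finset.univ.erase i, if e ∈ t j then 1 else 0) + (if e ∈ t i then 1 else 0) := by
    intro t e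
    rw [numUsers, Finset.card_filter, ← Finset.sum_erase_add _ _ (Finset.mem_univ i)]
  have hother : ∀ e : E, (∑ j ∈ Finset.univ.erase i, if e ∈ s' j then 1 else 0)
      = ∑ j ∈ Finset.univ.erase i, if e ∈ s j then 1 else 0 := by
    intro e; apply Finset.sum_congr rfl; intro j hj
    rw [hs', Function.update_of_ne (Finset.ne_of_mem_erase hj)]
  have key : ∀ e : E, c e * H (numUsers s' e) - c e * H (numUsers s e)
      = (if e ∈ P' then c e / (numUsers s' e : ℝ) else 0)
        - (if e ∈ s i then c e / (numUsers s e : ℝ) else 0) := by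
    intro e
    set m := ∑ j ∈ Finset.univ.erase i, if e ∈ s j then 1 else 0 with hm
    have h1 : numUsers s' e = m + (if e ∈ P' then 1 else 0) := by
      rw [hnum s' e, hother e, hs', Function.update_self]
    have h2 : numUsers s e = m + (if e ∈ s i then 1 else 0) := hnum s e
    have hH : H (m + 1) = H m + 1 / ((m : ℝ) + 1) := by
      rw [H, H, Finset.sum_range_succ]
    by_cases hP : e ∈ P' <;> by_cases hs : e ∈ s i <;>
        simp only [hP, hs, if_true, if_false, add_zero] at h1 h2 <;>
        rw [h1, h2] <;> simp only [hP, hs, if_true, if_false] <;>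
        (try rw [hH]) <;> push_cast <;> ring
  rw [potential, potential, playerCost, playerCost, ← Finset.sum_sub_distrib]
  have hPi : s' i = P' := Function.update_self i P' s
  rw [hPi]
  rw [← Finset.univ_inter P', ← Finset.sum_ite_mem, ← Finset.univ_inter (s i),
    ← Finset.sum_ite_mem, ← Finset.sum_sub_distrib]
  exact Finset.sum_congr rfl fun e _ => key e
end
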